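/- If ∀X⃗.(A ⇒ Y) ≡ ∀Z⃗.(B ⇒ W), where Y and W are type variables, then the quantifier prefixes are equal (X⃗ = Z⃗), A ≡ B, and Y = W. -/

import Mathlib

/-!
Every type is isomorphic to the conjunction of a multiset `canonPF A` of canonical primes, built
by pushing the arguments of an arrow into each prime of its target: under `∀X` go exactly the
arguments not mentioning `X`. This multiset is invariant under the six isomorphisms; currying
holds because pushing two argument multisets one after the other is the same as pushing their
sum, and `∀`/`⇒` commutation because the arguments concerned do not mention the bound variable.
A prime `∀X⃗.(A ⇒ Y)` has the single canonical factor `∀X⃗.(⋀canonPF A ⇒ Y)`, so from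
`∀X⃗.(A ⇒ Y) ≡ ∀Z⃗.(B ⇒ W)` we read off `X⃗ = Z⃗`, `Y = W` and `canonPF A = canonPF B`, whence
`A ≡ B`.
-/

/-- Types of Polymorphic System I: variables, arrows, conjunctions, universal types. -/
inductive Ty : Type
  | var : ℕ → Ty
  | arr : Ty → Ty → Ty
  | conj : Ty → Ty → Ty
  | all : ℕ → Ty → Ty
deriving DecidableEq

/-- Free type variables. -/
def ftv : Ty → Finset ℕ
  | .var X => {X}
  | .arr A B => ftv A ∪ ftv B
  | .conj A B => ftv A ∪ ftv B
  | .all X A => ftv A \ {X}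

/-- Type isomorphism ≡: the smallest congruence generated by the six isomorphisms of PSI. -/
inductive TyEquiv : Ty → Ty → Prop
  | comm (A B) : TyEquiv (.conj A B) (.conj B A)
  | assoc (A B C) : TyEquiv (.conj A (.conj B C)) (.conj (.conj A B) C)
  | distArr (A B C) : TyEquiv (.arr A (.conj B C)) (.conj (.arr A B) (.arr A C))
  | curry (A B C) : TyEquiv (.arr (.conj A B) C) (.arr A (.arr B C))
  | allArr (X A B) : X ∉ ftv A → TyEquiv (.all X (.arr A B)) (.arr A (.all X B))
  | allConj (X A B) : TyEquiv (.all X (.conj A B)) (.conj (.all X A) (.all X B))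
  | refl (A) : TyEquiv A A
  | symm {A B} : TyEquiv A B → TyEquiv B A
  | trans {A B C} : TyEquiv A B → TyEquiv B C → TyEquiv A C
  | congArr {A A' B B'} : TyEquiv A A' → TyEquiv B B' → TyEquiv (.arr A B) (.arr A' B')
  | congConj {A A' B B'} : TyEquiv A A' → TyEquiv B B' → TyEquiv (.conj A B) (.conj A' B')
  | congAll (X) {A B} : TyEquiv A B → TyEquiv (.all X A) (.all X B)

/-- Auxiliary for PF: turn ∀X⃗.(C ⇒ Y) into ∀X⃗.((A ∧ C) ⇒ Y). -/
def pushArr (A : Ty) : Ty → Ty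
  | .all X t => .all X (pushArr A t)
  | .arr C Y => .arr (.conj A C) Y
  | t => t

/-- Multiset of prime factors of a type. -/
def PF : Ty → Multiset Ty
  | .var X => {.var X}
  | .arr A B => (PF B).map (pushArr A)
  | .conj A B => PF A + PF B
  | .all X A => (PF A).map (.all X)

/-- Being of the form ∀X₁...∀Xₙ.(B ⇒ Y) with Y a type variable. -/
inductive IsPrimeForm : Ty → Prop
  | base (B Y) : IsPrimeForm (.arr B (.var Y))
  | step (X) {t} : IsPrimeForm t → IsPrimeForm (.all X t)

/-- Conjunction of a (nonempty) list of types, A₁ ∧ ... ∧ Aₙ. -/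
def conjList : List Ty → Ty
  | [] => .var 0
  | [A] => A
  | A :: l => .conj A (conjList l)

/-- ∀X₁...∀Xₙ.A -/
def allList (l : List ℕ) (A : Ty) : Ty := l.foldr .all A

/-- Substitution of a type for a type variable in a type. -/
def substTy (X : ℕ) (B : Ty) : Ty → Ty
  | .var Y => if Y = X then B else .var Y
  | .arr C D => .arr (substTy X B C) (substTy X B D)
  | .conj C D => .conj (substTy X B C) (substTy X B D)
  | .all Y C => if Y = X then .all Y C else .all Y (substTy X B C)

/-- Terms of PSI (Church style). -/
inductive Tm : Type
  | var : ℕ → Ty → Tm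
  | lam : ℕ → Ty → Tm → Tm
  | app : Tm → Tm → Tm
  | pair : Tm → Tm → Tm
  | proj : Ty → Tm → Tm
  | tlam : ℕ → Tm → Tm
  | tapp : Tm → Ty → Tm

/-- Substitution of a term for a term variable. -/
def substTm (x : ℕ) (s : Tm) : Tm → Tm
  | .var y A => if y = x then s else .var y A
  | .lam y A r => if y = x then .lam y A r else .lam y A (substTm x s r)
  | .app r t => .app (substTm x s r) (substTm x s t)
  | .pair r t => .pair (substTm x s r) (substTm x s t)
  | .proj A r => .proj A (substTm x s r)
  | .tlam X r => .tlam X (substTm x s r)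
  | .tapp r A => .tapp (substTm x s r) A

/-- Substitution of a type for a type variable in a term. -/
def substTyTm (X : ℕ) (B : Ty) : Tm → Tm
  | .var y A => .var y (substTy X B A)
  | .lam y A r => .lam y (substTy X B A) (substTyTm X B r)
  | .app r t => .app (substTyTm X B r) (substTyTm X B t)
  | .pair r t => .pair (substTyTm X B r) (substTyTm X B t)
  | .proj A r => .proj (substTy X B A) (substTyTm X B r)
  | .tlam Y r => if Y = X then .tlam Y r else .tlam Y (substTyTm X B r)
  | .tapp r A => .tapp (substTyTm X B r) (substTy X B A)

abbrev Ctx := List (ℕ × Ty)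

def ftvCtx (Γ : Ctx) : Finset ℕ := Γ.foldr (fun p s => ftv p.2 ∪ s) ∅

def substCtx (X : ℕ) (B : Ty) (Γ : Ctx) : Ctx := Γ.map (fun p => (p.1, substTy X B p.2))

/-- Typing relation of PSI. -/
inductive Typing : Ctx → Tm → Ty → Prop
  | ax {Γ x A} : (x, A) ∈ Γ → Typing Γ (.var x A) A
  | equiv {Γ r A B} : Typing Γ r A → TyEquiv A B → Typing Γ r B
  | arrI {Γ x A r B} : Typing ((x, A) :: Γ) r B → Typing Γ (.lam x A r) (.arr A B)
  | arrE {Γ r s A B} : Typing Γ r (.arr A B) → Typing Γ s A → Typing Γ (.app r s) B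
  | conjI {Γ r s A B} : Typing Γ r A → Typing Γ s B → Typing Γ (.pair r s) (.conj A B)
  | conjE {Γ r A B} : Typing Γ r (.conj A B) → Typing Γ (.proj A r) A
  | allI {Γ r X A} : Typing Γ r A → X ∉ ftvCtx Γ → Typing Γ (.tlam X r) (.all X A)
  | allE {Γ r X A B} : Typing Γ r (.all X A) → Typing Γ (.tapp r B) (substTy X B A)

/-- "r has type A" (context is redundant in Church style). -/
def HasTy (r : Tm) (A : Ty) : Prop := ∃ Γ, Typing Γ r A

/-- One-step structural equivalence ⇄ (symmetric, closed under all term contexts). -/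
inductive StEq : Tm → Tm → Prop
  | comm (r s) : StEq (.pair r s) (.pair s r)
  | assoc (r s t) : StEq (.pair r (.pair s t)) (.pair (.pair r s) t)
  | distLam (x A r s) : StEq (.lam x A (.pair r s)) (.pair (.lam x A r) (.lam x A s))
  | distApp (r s t) : StEq (.app (.pair r s) t) (.pair (.app r t) (.app s t))
  | curry (r s t) : StEq (.app r (.pair s t)) (.app (.app r s) t)
  | pcommII (X x A r) : X ∉ ftv A → StEq (.tlam X (.lam x A r)) (.lam x A (.tlam X r))
  | pcommEI (X x A B r) : X ∉ ftv A → StEq (.tapp (.lam x A r) B) (.lam x A (.tapp r B))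
  | pdistII (X r s) : StEq (.tlam X (.pair r s)) (.pair (.tlam X r) (.tlam X s))
  | pdistEI (r s A) : StEq (.tapp (.pair r s) A) (.pair (.tapp r A) (.tapp s A))
  | pdistIE (X A r) : StEq (.proj (.all X A) (.tlam X r)) (.tlam X (.proj A r))
  | pdistEE (X A B C r) : HasTy r (.all X (.conj B C)) →
      StEq (.tapp (.proj (.all X B) r) A) (.proj (substTy X A B) (.tapp r A))
  | symm {r s} : StEq r s → StEq s r
  | congLam (x A) {r s} : StEq r s → StEq (.lam x A r) (.lam x A s)
  | congAppL (t) {r s} : StEq r s → StEq (.app r t) (.app s t)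
  | congAppR (t) {r s} : StEq r s → StEq (.app t r) (.app t s)
  | congPairL (t) {r s} : StEq r s → StEq (.pair r t) (.pair s t)
  | congPairR (t) {r s} : StEq r s → StEq (.pair t r) (.pair t s)
  | congProj (A) {r s} : StEq r s → StEq (.proj A r) (.proj A s)
  | congTlam (X) {r s} : StEq r s → StEq (.tlam X r) (.tlam X s)
  | congTapp (A) {r s} : StEq r s → StEq (.tapp r A) (.tapp s A)

/-- One-step reduction ↪ (typed β-reductions and typed projection, closed under contexts). -/
inductive Red : Tm → Tm → Prop
  | beta (x A r s) : HasTy s A → Red (.app (.lam x A r) s) (substTm x s r)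
  | tbeta (X A r) : Red (.tapp (.tlam X r) A) (substTyTm X A r)
  | pi (A r s) : HasTy r A → Red (.proj A (.pair r s)) r
  | congLam (x A) {r s} : Red r s → Red (.lam x A r) (.lam x A s)
  | congAppL (t) {r s} : Red r s → Red (.app r t) (.app s t)
  | congAppR (t) {r s} : Red r s → Red (.app t r) (.app t s)
  | congPairL (t) {r s} : Red r s → Red (.pair r t) (.pair s t)
  | congPairR (t) {r s} : Red r s → Red (.pair t r) (.pair t s)
  | congProj (A) {r s} : Red r s → Red (.proj A r) (.proj A s)
  | congTlam (X) {r s} : Red r s → Red (.tlam X r) (.tlam X s)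
  | congTapp (A) {r s} : Red r s → Red (.tapp r A) (.tapp s A)

/-- ⇄*: reflexive-transitive closure of ⇄. -/
def SeqStar : Tm → Tm → Prop := Relation.ReflTransGen StEq

/-- The operational semantics → = ⇄* ∘ ↪ ∘ ⇄*. -/
def Step (r s : Tm) : Prop := ∃ r' s', SeqStar r r' ∧ Red r' s' ∧ SeqStar s' s

/-- Strong normalisation with respect to →. -/
def SN (r : Tm) : Prop := Acc (fun a b => Step b a) r

/-- The measure P on terms. -/
def Pm : Tm → ℕ
  | .var _ _ => 0
  | .lam _ _ r => Pm r
  | .app r _ => Pm r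
  | .pair r s => 1 + Pm r + Pm s
  | .proj _ r => Pm r
  | .tlam _ r => Pm r
  | .tapp r _ => Pm r

/-- The measure M on terms. -/
def Mm : Tm → ℕ
  | .var _ _ => 1
  | .lam _ _ r => 1 + Mm r + Pm r
  | .app r s => Mm r + Mm s + Pm r * Mm s
  | .pair r s => Mm r + Mm s
  | .proj _ r => 1 + Mm r + Pm r
  | .tlam _ r => 1 + Mm r + Pm r
  | .tapp r _ => 1 + Mm r + Pm r

local infix:50 " ≡ " => TyEquiv

instance : Trans TyEquiv TyEquiv TyEquiv := ⟨TyEquiv.trans⟩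

namespace TyEquiv

theorem ftv_eq {A B : Ty} (h : A ≡ B) : ftv A = ftv B := by
  induction h with
  | comm => exact Finset.union_comm ..
  | assoc => exact (Finset.union_assoc ..).symm
  | distArr => exact Finset.union_union_distrib_left ..
  | curry => exact Finset.union_assoc ..
  | allArr X A B hX =>
      rw [ftv, ftv, ftv, ftv, Finset.union_sdiff_distrib,
        Finset.sdiff_singleton_eq_erase X (ftv A), Finset.erase_eq_of_notMem hX]
  | allConj => exact Finset.union_sdiff_distrib ..
  | refl => rfl
  | symm _ ih => exact ih.symm
  | trans _ _ ih₁ ih₂ => exact ih₁.trans ih₂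
  | congArr _ _ ih₁ ih₂ | congConj _ _ ih₁ ih₂ => simp only [ftv, ih₁, ih₂]
  | congAll X _ ih => simp only [ftv, ih]

end TyEquiv

def Ty.IsConj : Ty → Prop
  | .conj _ _ => True
  | _ => False

def Ty.conjuncts : Ty → Multiset Ty
  | .conj A B => A.conjuncts + B.conjuncts
  | A => {A}

theorem Ty.conjuncts_of_not_isConj {A : Ty} (h : ¬ A.IsConj) : A.conjuncts = {A} := by
  cases A <;> simp_all [IsConj, conjuncts]

theorem conjList_cons_of_ne_nil (a : Ty) {l : List Ty} (hl : l ≠ []) :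
    conjList (a :: l) = .conj a (conjList l) := by
  cases l with
  | nil => contradiction
  | cons => rfl

theorem conjList_perm {l l' : List Ty} (h : l.Perm l') : conjList l ≡ conjList l' := by
  induction h with
  | nil => exact .refl _
  | @cons a l l' h ih =>
      rcases eq_or_ne l [] with rfl | hl
      · rw [← h.nil_eq]
        exact .refl _
      · rw [conjList_cons_of_ne_nil a hl, conjList_cons_of_ne_nil a fun e => hl (e ▸ h).eq_nil]
        exact .congConj (.refl a) ih
  | swap a b l =>
      rcases eq_or_ne l [] with rfl | hl
      · exact .comm b a
      · simp only [conjList_cons_of_ne_nil _ hl, conjList_cons_of_ne_nil _ (List.cons_ne_nil _ _)]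
        calc Ty.conj b (.conj a (conjList l))
            ≡ .conj (.conj b a) (conjList l) := .assoc ..
          _ ≡ .conj (.conj a b) (conjList l) := .congConj (.comm b a) (.refl _)
          _ ≡ .conj a (.conj b (conjList l)) := .symm (.assoc ..)
  | trans _ _ ih₁ ih₂ => exact ih₁.trans ih₂

theorem mem_ftv_conjList {l : List Ty} (hl : l ≠ []) {X : ℕ} :
    X ∈ ftv (conjList l) ↔ ∃ p ∈ l, X ∈ ftv p := by
  induction l with
  | nil => contradiction
  | cons a l ih =>
      rcases eq_or_ne l [] with rfl | hl'
      · simp [conjList]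
      · simp [conjList_cons_of_ne_nil a hl', ftv, ih hl']

theorem conjuncts_conjList {l : List Ty} (hl : l ≠ []) (h : ∀ p ∈ l, ¬ p.IsConj) :
    (conjList l).conjuncts = l := by
  induction l with
  | nil => contradiction
  | cons a l ih =>
      have ha : a.conjuncts = {a} := Ty.conjuncts_of_not_isConj (h a List.mem_cons_self)
      rcases eq_or_ne l [] with rfl | hl'
      · simpa [conjList] using ha
      · rw [conjList_cons_of_ne_nil a hl', Ty.conjuncts, ha,
          ih hl' fun p hp => h p (List.mem_cons_of_mem a hp)]
        rfl

/-- `Multiset.toList` fixes one ordering of each multiset, so equal multisets have syntactically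
equal conjunctions. (`bigConj 0` is a junk value.) -/
noncomputable def bigConj (m : Multiset Ty) : Ty := conjList m.toList

@[simp]
theorem bigConj_singleton (a : Ty) : bigConj {a} = a := by
  rw [bigConj, Multiset.toList_singleton]
  rfl

theorem bigConj_cons (a : Ty) {m : Multiset Ty} (hm : m ≠ 0) :
    bigConj (a ::ₘ m) ≡ .conj a (bigConj m) := by
  have hperm : (a ::ₘ m).toList.Perm (a :: m.toList) := by
    rw [← Multiset.coe_eq_coe, Multiset.coe_toList, ← Multiset.cons_coe, Multiset.coe_toList]
  rw [bigConj, bigConj, ← conjList_cons_of_ne_nil a (by simpa using hm)]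
  exact conjList_perm hperm

theorem bigConj_add {m k : Multiset Ty} (hm : m ≠ 0) (hk : k ≠ 0) :
    bigConj (m + k) ≡ .conj (bigConj m) (bigConj k) := by
  induction m using Multiset.induction_on with
  | empty => contradiction
  | cons a m ih =>
      rcases eq_or_ne m 0 with rfl | hm'
      · simpa using bigConj_cons a hk
      · calc bigConj (a ::ₘ m + k)
            ≡ .conj a (bigConj (m + k)) := by
              rw [Multiset.cons_add]; exact bigConj_cons a (by simp [hm'])
          _ ≡ .conj a (.conj (bigConj m) (bigConj k)) := .congConj (.refl a) (ih hm')
          _ ≡ .conj (.conj a (bigConj m)) (bigConj k) := .assoc ..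
          _ ≡ .conj (bigConj (a ::ₘ m)) (bigConj k) :=
              .congConj (bigConj_cons a hm').symm (.refl _)

theorem bigConj_map_congr {f g : Ty → Ty} {m : Multiset Ty} (h : ∀ a ∈ m, f a ≡ g a) :
    bigConj (m.map f) ≡ bigConj (m.map g) := by
  induction m using Multiset.induction_on with
  | empty => exact .refl _
  | cons a m ih =>
      have ih' := ih fun b hb => h b (Multiset.mem_cons_of_mem hb)
      rcases eq_or_ne m 0 with rfl | hm
      · simpa using h a (Multiset.mem_singleton_self a)
      · simp only [Multiset.map_cons]
        exact (bigConj_cons _ (by simpa)).trans <|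
          (TyEquiv.congConj (h a (Multiset.mem_cons_self a m)) ih').trans
            (bigConj_cons _ (by simpa)).symm

theorem bigConj_map_of_distrib {F : Ty → Ty} (hF : ∀ {a b}, TyEquiv a b → F a ≡ F b)
    (hdist : ∀ a b, F (.conj a b) ≡ .conj (F a) (F b)) {m : Multiset Ty} (hm : m ≠ 0) :
    F (bigConj m) ≡ bigConj (m.map F) := by
  induction m using Multiset.induction_on with
  | empty => contradiction
  | cons a m ih =>
      rcases eq_or_ne m 0 with rfl | hm'
      · simpa using TyEquiv.refl (F a)
      · calc F (bigConj (a ::ₘ m))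
            ≡ F (.conj a (bigConj m)) := hF (bigConj_cons a hm')
          _ ≡ .conj (F a) (F (bigConj m)) := hdist ..
          _ ≡ .conj (F a) (bigConj (m.map F)) := .congConj (.refl _) (ih hm')
          _ ≡ bigConj ((a ::ₘ m).map F) := by
              rw [Multiset.map_cons]; exact (bigConj_cons _ (by simpa)).symm

theorem mem_ftv_bigConj {m : Multiset Ty} (hm : m ≠ 0) {X : ℕ} :
    X ∈ ftv (bigConj m) ↔ ∃ p ∈ m, X ∈ ftv p := by
  simpa [bigConj] using mem_ftv_conjList (l := m.toList) (by simpa using hm)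

theorem conjuncts_bigConj {m : Multiset Ty} (hm : m ≠ 0) (h : ∀ p ∈ m, ¬ p.IsConj) :
    (bigConj m).conjuncts = m := by
  rw [bigConj, conjuncts_conjList (by simpa using hm) (by simpa using h), Multiset.coe_toList]

noncomputable def bigArr (m : Multiset Ty) (t : Ty) : Ty :=
  if m = 0 then t else .arr (bigConj m) t

@[simp]
theorem bigArr_zero (t : Ty) : bigArr 0 t = t := if_pos rfl

theorem bigArr_of_ne_zero {m : Multiset Ty} (hm : m ≠ 0) (t : Ty) :
    bigArr m t = .arr (bigConj m) t := if_neg hm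

theorem bigArr_congr (m : Multiset Ty) {t u : Ty} (h : t ≡ u) : bigArr m t ≡ bigArr m u := by
  rcases eq_or_ne m 0 with rfl | hm
  · simpa using h
  · simpa only [bigArr_of_ne_zero hm] using TyEquiv.congArr (.refl _) h

theorem bigArr_add (m k : Multiset Ty) (t : Ty) : bigArr (m + k) t ≡ bigArr m (bigArr k t) := by
  rcases eq_or_ne m 0 with rfl | hm
  · simpa using TyEquiv.refl _
  rcases eq_or_ne k 0 with rfl | hk
  · simpa using TyEquiv.refl _
  rw [bigArr_of_ne_zero (by simp [hm]), bigArr_of_ne_zero hm, bigArr_of_ne_zero hk]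
  exact (TyEquiv.congArr (bigConj_add hm hk) (.refl t)).trans (.curry ..)

theorem bigArr_all {m : Multiset Ty} {X : ℕ} (hX : ∀ p ∈ m, X ∉ ftv p) (t : Ty) :
    bigArr m (.all X t) ≡ .all X (bigArr m t) := by
  rcases eq_or_ne m 0 with rfl | hm
  · simpa using TyEquiv.refl _
  rw [bigArr_of_ne_zero hm, bigArr_of_ne_zero hm]
  refine .symm (.allArr X _ t fun h => ?_)
  obtain ⟨p, hp, hXp⟩ := (mem_ftv_bigConj hm).mp h
  exact hX p hp hXp

/-- The shape of canonical primes. Arrow sources are kept in the form `bigConj m`, from which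
`conjuncts` recovers `m`, so that further arguments can be merged into them. -/
inductive Canon : Ty → Prop
  | var (Y : ℕ) : Canon (.var Y)
  | arr {m : Multiset Ty} {t : Ty} : m ≠ 0 → (∀ p ∈ m, ¬ p.IsConj) → Canon t →
      Canon (.arr (bigConj m) t)
  | all (X : ℕ) {t : Ty} : Canon t → Canon (.all X t)

theorem Canon.not_isConj {t : Ty} (h : Canon t) : ¬ t.IsConj := by
  cases h <;> exact id

theorem canon_bigArr {m : Multiset Ty} (hm : ∀ p ∈ m, ¬ p.IsConj) {t : Ty} (ht : Canon t) :
    Canon (bigArr m t) := by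
  rcases eq_or_ne m 0 with rfl | hm0
  · simpa using ht
  · rw [bigArr_of_ne_zero hm0]
    exact .arr hm0 hm ht

/-- `⋀m ⇒ t`, with `m` merged into the source when `t` is itself an arrow. -/
noncomputable def prependArgs (m : Multiset Ty) : Ty → Ty
  | .arr C D => bigArr (m + C.conjuncts) D
  | t => bigArr m t

theorem prependArgs_arr_bigConj (m : Multiset Ty) {k : Multiset Ty} (hk : k ≠ 0)
    (hkc : ∀ p ∈ k, ¬ p.IsConj) (t : Ty) :
    prependArgs m (.arr (bigConj k) t) = bigArr (m + k) t := by
  rw [prependArgs, conjuncts_bigConj hk hkc]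

theorem canon_prependArgs {m : Multiset Ty} (hm : ∀ p ∈ m, ¬ p.IsConj) {t : Ty}
    (ht : Canon t) : Canon (prependArgs m t) := by
  cases ht with
  | var Y => exact canon_bigArr hm (.var Y)
  | all X ht => exact canon_bigArr hm (.all X ht)
  | arr hk hkc ht =>
      rw [prependArgs_arr_bigConj m hk hkc]
      exact canon_bigArr (fun p hp => (Multiset.mem_add.mp hp).elim (hm p) (hkc p)) ht

theorem prependArgs_zero {t : Ty} (ht : Canon t) : prependArgs 0 t = t := by
  cases ht with
  | var | all => rfl
  | arr hk hkc => rw [prependArgs_arr_bigConj 0 hk hkc, zero_add, bigArr_of_ne_zero hk]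

theorem prependArgs_prependArgs (m : Multiset Ty) {k : Multiset Ty} (hk : ∀ p ∈ k, ¬ p.IsConj)
    {t : Ty} (ht : Canon t) : prependArgs m (prependArgs k t) = prependArgs (m + k) t := by
  rcases eq_or_ne k 0 with rfl | hk0
  · rw [prependArgs_zero ht, add_zero]
  cases ht with
  | var | all =>
      show prependArgs m (bigArr k _) = bigArr (m + k) _
      rw [bigArr_of_ne_zero hk0, prependArgs_arr_bigConj m hk0 hk]
  | @arr j t hj hjc =>
      have hkj : k + j ≠ 0 := by simp [hk0]
      rw [prependArgs_arr_bigConj _ hj hjc, prependArgs_arr_bigConj _ hj hjc,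
        bigArr_of_ne_zero hkj, prependArgs_arr_bigConj m hkj
          fun p hp => (Multiset.mem_add.mp hp).elim (hk p) (hjc p), add_assoc]

theorem bigArr_equiv_prependArgs (m : Multiset Ty) {t : Ty} (ht : Canon t) :
    bigArr m t ≡ prependArgs m t := by
  cases ht with
  | var | all => exact .refl _
  | @arr j t hj hjc =>
      rw [prependArgs_arr_bigConj m hj hjc, ← bigArr_of_ne_zero hj]
      exact (bigArr_add m j t).symm

/-- Canonical form of `⋀a ⇒ t` for canonical `t`: the arguments travel under `∀X` exactly when
they do not mention `X`. -/
noncomputable def pushArgs : Multiset Ty → Ty → Ty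
  | a, .var Y => bigArr a (.var Y)
  | a, .arr C D => prependArgs C.conjuncts (pushArgs a D)
  | a, .conj C D => bigArr a (.conj C D)
  | a, .all X t => bigArr (a.filter (X ∈ ftv ·)) (.all X (pushArgs (a.filter (X ∉ ftv ·)) t))

theorem pushArgs_var (a : Multiset Ty) (Y : ℕ) :
    pushArgs a (.var Y) = prependArgs a (.var Y) := rfl

theorem pushArgs_all (a : Multiset Ty) (X : ℕ) (t : Ty) :
    pushArgs a (.all X t) =
      prependArgs (a.filter (X ∈ ftv ·)) (.all X (pushArgs (a.filter (X ∉ ftv ·)) t)) := rfl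

theorem pushArgs_arr_bigConj (a : Multiset Ty) {m : Multiset Ty} (hm : m ≠ 0)
    (hmc : ∀ p ∈ m, ¬ p.IsConj) (t : Ty) :
    pushArgs a (.arr (bigConj m) t) = prependArgs m (pushArgs a t) := by
  rw [pushArgs, conjuncts_bigConj hm hmc]

theorem canon_pushArgs {a : Multiset Ty} (ha : ∀ p ∈ a, ¬ p.IsConj) {t : Ty} (ht : Canon t) :
    Canon (pushArgs a t) := by
  induction ht generalizing a with
  | var Y => exact canon_bigArr ha (.var Y)
  | arr hm hmc _ ih =>
      rw [pushArgs_arr_bigConj a hm hmc]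
      exact canon_prependArgs hmc (ih ha)
  | all X _ ih =>
      exact canon_bigArr (fun p hp => ha p (Multiset.mem_of_mem_filter hp))
        (.all X (ih fun p hp => ha p (Multiset.mem_of_mem_filter hp)))

theorem pushArgs_prependArgs {a : Multiset Ty} (ha : ∀ p ∈ a, ¬ p.IsConj) {m : Multiset Ty}
    (hm : ∀ p ∈ m, ¬ p.IsConj) {t : Ty} (ht : Canon t) :
    pushArgs a (prependArgs m t) = prependArgs m (pushArgs a t) := by
  rcases eq_or_ne m 0 with rfl | hm0
  · rw [prependArgs_zero ht, prependArgs_zero (canon_pushArgs ha ht)]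
  cases ht with
  | var | all =>
      show pushArgs a (bigArr m _) = _
      rw [bigArr_of_ne_zero hm0, pushArgs_arr_bigConj a hm0 hm]
  | @arr j t hj hjc ht =>
      have hmj : m + j ≠ 0 := by simp [hj]
      rw [prependArgs_arr_bigConj m hj hjc, bigArr_of_ne_zero hmj,
        pushArgs_arr_bigConj a hmj fun p hp => (Multiset.mem_add.mp hp).elim (hm p) (hjc p),
        pushArgs_arr_bigConj a hj hjc, prependArgs_prependArgs m hjc (canon_pushArgs ha ht)]

theorem pushArgs_pushArgs {a b : Multiset Ty} (ha : ∀ p ∈ a, ¬ p.IsConj)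
    (hb : ∀ p ∈ b, ¬ p.IsConj) {t : Ty} (ht : Canon t) :
    pushArgs a (pushArgs b t) = pushArgs (a + b) t := by
  induction ht generalizing a b with
  | var Y =>
      rw [pushArgs_var, pushArgs_prependArgs ha hb (.var Y), pushArgs_var,
        prependArgs_prependArgs b ha (.var Y), add_comm, pushArgs_var]
  | arr hm hmc ht ih =>
      simp only [pushArgs_arr_bigConj _ hm hmc]
      rw [pushArgs_prependArgs ha hmc (canon_pushArgs hb ht), ih ha hb]
  | all X ht ih =>
      have hfa : ∀ (q : Ty → Prop) [DecidablePred q], ∀ p ∈ a.filter q, ¬ p.IsConj :=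
        fun _ _ p hp => ha p (Multiset.mem_of_mem_filter hp)
      have hfb : ∀ (q : Ty → Prop) [DecidablePred q], ∀ p ∈ b.filter q, ¬ p.IsConj :=
        fun _ _ p hp => hb p (Multiset.mem_of_mem_filter hp)
      have hfab := canon_pushArgs (hfa (X ∉ ftv ·)) (canon_pushArgs (hfb (X ∉ ftv ·)) ht)
      rw [pushArgs_all, pushArgs_prependArgs ha (hfb _) (.all X (canon_pushArgs (hfb _) ht)),
        pushArgs_all, prependArgs_prependArgs _ (hfa _) (.all X hfab), ih (hfa _) (hfb _),
        pushArgs_all, Multiset.filter_add, Multiset.filter_add, add_comm (b.filter _)]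

theorem bigArr_equiv_pushArgs {a : Multiset Ty} (ha : ∀ p ∈ a, ¬ p.IsConj) {t : Ty}
    (ht : Canon t) : bigArr a t ≡ pushArgs a t := by
  induction ht generalizing a with
  | var Y => exact .refl _
  | @arr m t hm hmc ht ih =>
      calc bigArr a (.arr (bigConj m) t)
          ≡ bigArr (a + m) t := by rw [← bigArr_of_ne_zero hm]; exact (bigArr_add a m t).symm
        _ ≡ bigArr m (bigArr a t) := by rw [add_comm]; exact bigArr_add m a t
        _ ≡ bigArr m (pushArgs a t) := bigArr_congr m (ih ha)
        _ ≡ pushArgs a (.arr (bigConj m) t) := by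
            rw [pushArgs_arr_bigConj a hm hmc]
            exact bigArr_equiv_prependArgs m (canon_pushArgs ha ht)
  | @all X t _ ih =>
      calc bigArr a (.all X t)
          ≡ bigArr (a.filter (X ∈ ftv ·)) (bigArr (a.filter (X ∉ ftv ·)) (.all X t)) := by
            rw (occs := [1]) [← Multiset.filter_add_not (X ∈ ftv ·) a]
            exact bigArr_add ..
        _ ≡ bigArr (a.filter (X ∈ ftv ·)) (.all X (bigArr (a.filter (X ∉ ftv ·)) t)) :=
            bigArr_congr _ (bigArr_all (fun _ hp => (Multiset.mem_filter.mp hp).2) t)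
        _ ≡ pushArgs a (.all X t) :=
            bigArr_congr _ (.congAll X (ih fun p hp => ha p (Multiset.mem_of_mem_filter hp)))

noncomputable def canonPF : Ty → Multiset Ty
  | .var Y => {.var Y}
  | .arr A B => (canonPF B).map (pushArgs (canonPF A))
  | .conj A B => canonPF A + canonPF B
  | .all X A => (canonPF A).map (.all X)

theorem canonPF_ne_zero (A : Ty) : canonPF A ≠ 0 := by
  induction A <;> simp_all [canonPF]

theorem canon_of_mem_canonPF {A p : Ty} (hp : p ∈ canonPF A) : Canon p := by
  induction A generalizing p with
  | var Y =>
      rw [canonPF, Multiset.mem_singleton] at hp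
      exact hp ▸ .var Y
  | arr A B ihA ihB =>
      obtain ⟨q, hq, rfl⟩ := Multiset.mem_map.mp hp
      exact canon_pushArgs (fun r hr => (ihA hr).not_isConj) (ihB hq)
  | conj A B ihA ihB => exact (Multiset.mem_add.mp hp).elim ihA ihB
  | all X A ih =>
      obtain ⟨q, hq, rfl⟩ := Multiset.mem_map.mp hp
      exact .all X (ih hq)

theorem not_isConj_of_mem_canonPF (A : Ty) : ∀ p ∈ canonPF A, ¬ p.IsConj :=
  fun _ hp => (canon_of_mem_canonPF hp).not_isConj

theorem equiv_bigConj_canonPF (A : Ty) : A ≡ bigConj (canonPF A) := by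
  induction A with
  | var Y => simpa [canonPF] using TyEquiv.refl _
  | arr A B ihA ihB =>
      have hA := canonPF_ne_zero A
      calc Ty.arr A B
          ≡ .arr (bigConj (canonPF A)) (bigConj (canonPF B)) := .congArr ihA ihB
        _ ≡ bigConj ((canonPF B).map (.arr (bigConj (canonPF A)))) :=
            bigConj_map_of_distrib (.congArr (.refl _)) (.distArr _) (canonPF_ne_zero B)
        _ ≡ bigConj (canonPF (.arr A B)) := bigConj_map_congr fun q hq => by
            rw [← bigArr_of_ne_zero hA]
            exact bigArr_equiv_pushArgs (not_isConj_of_mem_canonPF _)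
              (canon_of_mem_canonPF hq)
  | conj A B ihA ihB =>
      exact (TyEquiv.congConj ihA ihB).trans
        (bigConj_add (canonPF_ne_zero A) (canonPF_ne_zero B)).symm
  | all X A ih =>
      exact (TyEquiv.congAll X ih).trans
        (bigConj_map_of_distrib (.congAll X) (.allConj X) (canonPF_ne_zero A))

theorem ftv_subset_of_mem_canonPF {A p : Ty} (hp : p ∈ canonPF A) : ftv p ⊆ ftv A := by
  intro X hX
  rw [(equiv_bigConj_canonPF A).ftv_eq, mem_ftv_bigConj (canonPF_ne_zero A)]
  exact ⟨p, hp, hX⟩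

theorem TyEquiv.canonPF_eq {A B : Ty} (h : A ≡ B) : canonPF A = canonPF B := by
  induction h with
  | comm => exact add_comm ..
  | assoc => exact (add_assoc ..).symm
  | distArr | allConj => exact Multiset.map_add ..
  | curry =>
      simp only [canonPF, Multiset.map_map]
      refine Multiset.map_congr rfl fun q hq => ?_
      exact (pushArgs_pushArgs (not_isConj_of_mem_canonPF _)
        (not_isConj_of_mem_canonPF _) (canon_of_mem_canonPF hq)).symm
  | allArr X A _ hX =>
      simp only [canonPF, Multiset.map_map]
      refine Multiset.map_congr rfl fun q _ => ?_
      have hfree : ∀ p ∈ canonPF A, X ∉ ftv p := fun p hp hXp =>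
        hX (ftv_subset_of_mem_canonPF hp hXp)
      show Ty.all X (pushArgs _ q) = pushArgs _ (.all X q)
      rw [pushArgs_all, Multiset.filter_eq_nil.mpr hfree, Multiset.filter_eq_self.mpr hfree]
      rfl
  | refl => rfl
  | symm _ ih => exact ih.symm
  | trans _ _ ih₁ ih₂ => exact ih₁.trans ih₂
  | congArr _ _ ih₁ ih₂ | congConj _ _ ih₁ ih₂ => simp only [canonPF, ih₁, ih₂]
  | congAll X _ ih => simp only [canonPF, ih]

theorem canonPF_allList_arr_var (xs : List ℕ) (A : Ty) (Y : ℕ) :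
    canonPF (allList xs (.arr A (.var Y))) =
      {allList xs (.arr (bigConj (canonPF A)) (.var Y))} := by
  induction xs with
  | nil =>
      simp [allList, canonPF, pushArgs_var, prependArgs, bigArr_of_ne_zero (canonPF_ne_zero A)]
  | cons X xs ih =>
      simp only [allList, List.foldr_cons, canonPF] at ih ⊢
      rw [ih, Multiset.map_singleton]

theorem allList_arr_inj {xs zs : List ℕ} {C D C' D' : Ty}
    (h : allList xs (.arr C D) = allList zs (.arr C' D')) : xs = zs ∧ C = C' ∧ D = D' := by
  induction xs generalizing zs with
  | nil => cases zs <;> simp_all [allList]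
  | cons X xs ih =>
      cases zs with
      | nil => simp [allList] at h
      | cons Z zs =>
          obtain ⟨rfl, hbody⟩ :=
            Ty.all.inj (h : Ty.all X (allList xs _) = .all Z (allList zs _))
          obtain ⟨rfl, hC, hD⟩ := ih hbody
          exact ⟨rfl, hC, hD⟩

/-- If ∀X⃗.(A ⇒ Y) ≡ ∀Z⃗.(B ⇒ W) then X⃗ = Z⃗, A ≡ B and Y = W. -/
theorem eq_primes (xs zs : List ℕ) (A B : Ty) (Y W : ℕ)
    (h : TyEquiv (allList xs (.arr A (.var Y))) (allList zs (.arr B (.var W)))) :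
    xs = zs ∧ TyEquiv A B ∧ Y = W := by
  have hPF := h.canonPF_eq
  rw [canonPF_allList_arr_var, canonPF_allList_arr_var, Multiset.singleton_inj] at hPF
  obtain ⟨hxz, hAB, hYW⟩ := allList_arr_inj hPF
  refine ⟨hxz, ?_, Ty.var.inj hYW⟩
  calc A ≡ bigConj (canonPF A) := equiv_bigConj_canonPF A
    _ = bigConj (canonPF B) := hAB
    _ ≡ B := (equiv_bigConj_canonPF B).symm
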